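/- Let c ≥ 0 and define ρ = 1/(2+c). If the total entropy bound H(c) = (1/2)·(h_B(1/(2+c)) + (2/(2+c))·ln 2) satisfies H(c) ≥ 0.4075, then c ≤ 2.6802 and hence ρ ≥ 0.21367. -/

import Mathlib

/-- The binary entropy function. -/
noncomputable def hB (p : ℝ) : ℝ := -p * Real.log p - (1 - p) * Real.log (1 - p)

/-!
On `[0, 1/2]` the bound `H(ρ) = (h_B(ρ) + 2ρ ln 2) / 2` is strictly increasing in `ρ`, because the
binary entropy is. Since `H(0.21367) < 0.4075` numerically, `H(1/(2+c)) ≥ 0.4075` forces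
`1/(2+c) > 0.21367`, that is `c < 1/0.21367 - 2 ≈ 2.68011`.
-/

open Real Set Finset

noncomputable def entropyBound (ρ : ℝ) : ℝ := (1 / 2) * (hB ρ + 2 * ρ * log 2)

lemma hB_eq_binEntropy : hB = binEntropy := by
  ext p
  simp only [hB, binEntropy, log_inv]
  ring

lemma entropyBound_strictMonoOn : StrictMonoOn entropyBound (Icc 0 2⁻¹) := by
  intro a ha b hb hab
  have hbin := binEntropy_strictMonoOn ha hb hab
  simp only [entropyBound, hB_eq_binEntropy]
  nlinarith [log_pos one_lt_two]

lemma neg_lt_log_of_one_lt_mul_sum_range {x t : ℝ} (n : ℕ) (hx : 0 < x) (ht : 0 ≤ t)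
    (h : 1 < x * ∑ i ∈ range n, t ^ i / (i.factorial : ℝ)) : -t < log x := by
  rw [lt_log_iff_exp_lt hx, exp_neg, inv_lt_iff_one_lt_mul₀ (exp_pos t)]
  nlinarith [sum_le_exp_of_nonneg ht n]

lemma neg_lt_log_0_85468 : -0.1570290 < log 0.85468 := by
  apply neg_lt_log_of_one_lt_mul_sum_range 7 (by norm_num) (by norm_num)
  simp only [sum_range_succ, sum_range_zero, Nat.factorial]
  norm_num

lemma neg_lt_log_0_78633 : -0.2403795 < log 0.78633 := by
  apply neg_lt_log_of_one_lt_mul_sum_range 8 (by norm_num) (by norm_num)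
  simp only [sum_range_succ, sum_range_zero, Nat.factorial]
  norm_num

lemma entropyBound_0_21367_lt : entropyBound 0.21367 < 0.4075 := by
  -- Splitting off the factor `1/4` leaves logarithms near `1`, where few exponential terms suffice.
  have hlog : log 0.21367 = log 0.85468 - 2 * log 2 := by
    rw [show (0.21367 : ℝ) = 0.85468 / 2 ^ 2 by norm_num,
      log_div (by norm_num) (by norm_num), log_pow]
    norm_num
  simp only [entropyBound, hB, hlog]
  norm_num
  linarith [neg_lt_log_0_85468, neg_lt_log_0_78633, log_two_lt_d9]

/-- If the entropy bound `H(c) = (1/2)(h_B(1/(2+c)) + (2/(2+c)) ln 2)` is at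
least `0.4075` for some `c ≥ 0`, then `c ≤ 2.6802` and the density
`ρ = 1/(2+c)` is at least `0.21367`. -/
theorem density_lower_bound (c : ℝ) (hc : 0 ≤ c)
    (hH : (1 / 2) * (hB (1 / (2 + c)) + (2 / (2 + c)) * Real.log 2) ≥ 0.4075) :
    c ≤ 2.6802 ∧ 1 / (2 + c) ≥ 0.21367 := by
  have h2c : 0 < 2 + c := by linarith
  have hρ : 1 / (2 + c) ∈ Icc (0 : ℝ) 2⁻¹ :=
    ⟨by positivity, by rw [one_div]; exact inv_anti₀ two_pos (by linarith)⟩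
  have hHρ : 0.4075 ≤ entropyBound (1 / (2 + c)) := by
    rw [entropyBound, mul_one_div]
    exact hH
  have hρ_ge : 0.21367 ≤ 1 / (2 + c) := by
    by_contra! hlt
    have := entropyBound_strictMonoOn hρ ⟨by norm_num, by norm_num⟩ hlt
    linarith [entropyBound_0_21367_lt]
  refine ⟨?_, hρ_ge⟩
  rw [le_div_iff₀ h2c] at hρ_ge
  linarith
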